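/- Let G be a connected graph with n vertices such that the complement graph Ḡ is also connected. Then DE(G) + DE(Ḡ) ≥ 6(n − 1). -/

import Mathlib

/-!
The distance matrix `D` of a graph has zero trace, so its eigenvalues sum to zero and
`DE(G) ≥ 2 λ₁(D)`; by the Rayleigh quotient at the all-ones vector, `n λ₁(D) ≥ ∑ᵢⱼ Dᵢⱼ`.
Two distinct vertices are adjacent in exactly one of `G`, `Ḡ`, and if both graphs are
connected they are at distance at least `2` in the other one, so `d_G(i,j) + d_Ḡ(i,j) ≥ 3`.
Summing over ordered pairs, `n (DE(G) + DE(Ḡ)) ≥ 2 ∑ᵢⱼ (D(G) + D(Ḡ))ᵢⱼ ≥ 6 n (n - 1)`.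
-/

open SimpleGraph Finset

/-- The distance matrix of a graph `G`: the `(i,j)` entry is the graph distance
between `i` and `j`, as a real number. -/
noncomputable def distMatrix {V : Type*} [Fintype V] (G : SimpleGraph V) : Matrix V V ℝ :=
  fun i j => (G.dist i j : ℝ)

lemma distMatrix_isHermitian {V : Type*} [Fintype V] (G : SimpleGraph V) :
    (distMatrix G).IsHermitian := by
  unfold Matrix.IsHermitian
  ext i j
  simp [distMatrix, Matrix.conjTranspose_apply, SimpleGraph.dist_comm]

/-- The distance spectral radius of `G`: the largest eigenvalue of the distance matrix. -/
noncomputable def distSpectralRadius {V : Type*} [Fintype V] [DecidableEq V]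
    (G : SimpleGraph V) : ℝ :=
  ⨆ i, (distMatrix_isHermitian G).eigenvalues i

/-- The distance energy of `G`: the sum of the absolute values of the eigenvalues of
the distance matrix. -/
noncomputable def distEnergy {V : Type*} [Fintype V] [DecidableEq V]
    (G : SimpleGraph V) : ℝ :=
  ∑ i, |(distMatrix_isHermitian G).eigenvalues i|

theorem Finset.two_mul_le_sum_abs_of_sum_eq_zero {ι : Type*} {s : Finset ι} {f : ι → ℝ}
    (hf : ∑ i ∈ s, f i = 0) {k : ι} (hk : k ∈ s) : 2 * f k ≤ ∑ i ∈ s, |f i| :=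
  calc 2 * f k ≤ |f k| + f k := by linarith [le_abs_self (f k)]
    _ ≤ ∑ i ∈ s, (|f i| + f i) :=
      single_le_sum (f := fun i ↦ |f i| + f i) (fun i _ ↦ by linarith [neg_abs_le (f i)]) hk
    _ = ∑ i ∈ s, |f i| := by rw [sum_add_distrib, hf, add_zero]

namespace Matrix.IsHermitian

open scoped ComplexOrder

variable {n 𝕜 : Type*} [Fintype n] [DecidableEq n] [RCLike 𝕜]

theorem posSemidef_smul_one_sub {A : Matrix n n 𝕜} (hA : A.IsHermitian) {c : ℝ}
    (hc : ∀ i, hA.eigenvalues i ≤ c) : (c • 1 - A).PosSemidef := by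
  set U : Matrix n n 𝕜 := (hA.eigenvectorUnitary : Matrix n n 𝕜)
  have hD : diagonal (RCLike.ofReal ∘ fun i ↦ c - hA.eigenvalues i) =
      c • (1 : Matrix n n 𝕜) - diagonal (RCLike.ofReal ∘ hA.eigenvalues) := by
    ext i j
    by_cases h : i = j <;> simp [h, diagonal, RCLike.real_smul_eq_coe_mul]
  have hconj :
      c • 1 - A = U * diagonal (RCLike.ofReal ∘ fun i ↦ c - hA.eigenvalues i) * star U := by
    conv_lhs => rw [hA.spectral_theorem, Unitary.conjStarAlgAut_apply]
    rw [hD, mul_sub, sub_mul, mul_smul_comm, smul_mul_assoc, mul_one,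
      Unitary.mul_star_self_of_mem hA.eigenvectorUnitary.2]
  rw [hconj]
  exact (PosSemidef.diagonal fun i ↦ by simpa using hc i).mul_mul_conjTranspose_same _

theorem sum_sum_le_card_mul_of_eigenvalues_le {A : Matrix n n ℝ} (hA : A.IsHermitian) {c : ℝ}
    (hc : ∀ i, hA.eigenvalues i ≤ c) : ∑ i, ∑ j, A i j ≤ Fintype.card n * c := by
  have := (hA.posSemidef_smul_one_sub hc).dotProduct_mulVec_nonneg 1
  rw [star_one, sub_mulVec, dotProduct_sub, smul_mulVec, one_mulVec, dotProduct_smul,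
    one_dotProduct_one, one_dotProduct] at this
  simp only [mulVec, dotProduct_one, smul_eq_mul] at this
  linarith

theorem two_mul_sum_sum_le_card_mul_sum_abs_eigenvalues {A : Matrix n n ℝ} (hA : A.IsHermitian)
    (htr : A.trace = 0) :
    2 * ∑ i, ∑ j, A i j ≤ Fintype.card n * ∑ i, |hA.eigenvalues i| := by
  have hsum : ∑ i, hA.eigenvalues i = 0 := by simpa [hA.trace_eq_sum_eigenvalues] using htr
  have := hA.sum_sum_le_card_mul_of_eigenvalues_le (c := (∑ i, |hA.eigenvalues i|) / 2)
    fun k ↦ by linarith [two_mul_le_sum_abs_of_sum_eq_zero hsum (mem_univ k)]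
  linarith

end Matrix.IsHermitian

namespace SimpleGraph

variable {V : Type*} {G : SimpleGraph V}

theorem three_le_dist_add_dist_compl (hG : G.Connected) (hGc : Gᶜ.Connected) {i j : V}
    (hij : i ≠ j) : 3 ≤ G.dist i j + Gᶜ.dist i j := by
  have := hG.pos_dist_of_ne hij
  have := hGc.pos_dist_of_ne hij
  by_cases h : G.Adj i j
  · have : Gᶜ.dist i j ≠ 1 := fun h' ↦ (dist_eq_one_iff_adj.mp h').2 h
    omega
  · have : G.dist i j ≠ 1 := fun h' ↦ h (dist_eq_one_iff_adj.mp h')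
    omega

end SimpleGraph

theorem trace_distMatrix {V : Type*} [Fintype V] (G : SimpleGraph V) :
    (distMatrix G).trace = 0 := by
  simp [Matrix.trace, distMatrix]

theorem three_mul_card_mul_le_sum_distMatrix_add_distMatrix_compl {V : Type*} [Fintype V]
    {G : SimpleGraph V} (hG : G.Connected) (hGc : Gᶜ.Connected) :
    3 * (Fintype.card V * (Fintype.card V - 1)) ≤
      ∑ i, ∑ j, (distMatrix G + distMatrix Gᶜ) i j := by
  classical
  have hrow (i : V) :
      3 * ((Fintype.card V : ℝ) - 1) ≤ ∑ j, (distMatrix G + distMatrix Gᶜ) i j := by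
    rw [← sum_erase univ (a := i) (by simp [distMatrix])]
    calc 3 * ((Fintype.card V : ℝ) - 1) = ∑ j ∈ univ.erase i, (3 : ℝ) := by
          rw [sum_const, card_erase_of_mem (mem_univ i), card_univ, nsmul_eq_mul,
            Nat.cast_pred (Fintype.card_pos_iff.mpr ⟨i⟩), mul_comm]
      _ ≤ _ := sum_le_sum fun j hj ↦ by
          have := three_le_dist_add_dist_compl hG hGc (ne_of_mem_erase hj).symm
          simp only [Matrix.add_apply, distMatrix]
          exact_mod_cast this
  calc 3 * (Fintype.card V * ((Fintype.card V : ℝ) - 1))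
      = ∑ _i : V, 3 * ((Fintype.card V : ℝ) - 1) := by
        rw [sum_const, card_univ, nsmul_eq_mul]; ring
    _ ≤ _ := sum_le_sum fun i _ ↦ hrow i

/-- **Theorem 9.** For a connected graph `G` on `n` vertices with connected complement,
`DE(G) + DE(Ḡ) ≥ 6(n-1)`. -/
theorem distEnergy_add_distEnergy_compl {n : ℕ} (G : SimpleGraph (Fin n))
    (hconn : G.Connected) (hconn' : Gᶜ.Connected) :
    6 * ((n : ℝ) - 1) ≤ distEnergy G + distEnergy Gᶜ := by
  have hn : (0 : ℝ) < n := by exact_mod_cast Fin.pos_iff_nonempty.mpr hconn.nonempty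
  have hG := (distMatrix_isHermitian G).two_mul_sum_sum_le_card_mul_sum_abs_eigenvalues
    (trace_distMatrix G)
  have hGc := (distMatrix_isHermitian Gᶜ).two_mul_sum_sum_le_card_mul_sum_abs_eigenvalues
    (trace_distMatrix Gᶜ)
  have hdist := three_mul_card_mul_le_sum_distMatrix_add_distMatrix_compl hconn hconn'
  simp only [Matrix.add_apply, sum_add_distrib, Fintype.card_fin] at hG hGc hdist
  refine le_of_mul_le_mul_left ?_ hn
  rw [distEnergy, distEnergy]
  linarith
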